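/- Let N ≥ 2, let (τ_1,…,τ_N; ω_1,…,ω_N) be a Radau quadrature rule of order N, and let D‡ be the associated N×N matrix with entries D‡_{ij} = -(ω_j/ω_i) D_{ji}. Then for every real polynomial p of degree at most N−1, writing p = (p(τ_1),…,p(τ_N)), one has (D‡ p)_i = ṗ(τ_i) for 1 ≤ i ≤ N−1 and (D‡ p)_N = ṗ(τ_N) − p(1)/ω_N, where ṗ is the derivative of p. In particular, D‡ 1 = −(1/ω_N) e_N, where 1 is the all-ones vector and e_N is the N-th standard basis vector. -/

import Mathlib

open Polynomial Matrix

noncomputable section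

/-- The differentiation matrix associated with nodes `σ 0, σ 1, …, σ N`
(`σ 0` being the non-collocated point):  `D i j = L̇_j(σ (i+1))`,
where `L_j` is the `j`-th Lagrange basis polynomial of the nodes. -/
def diffMat (N : ℕ) (σ : Fin (N + 1) → ℝ) : Matrix (Fin N) (Fin (N + 1)) ℝ :=
  fun i j => (derivative (Lagrange.basis Finset.univ σ j)).eval (σ i.succ)

/-- The matrix `D‡` with entries `D‡_{ij} = -(ω_j/ω_i) D_{ji}`, the indices
`i, j` of `D` ranging over the collocation points `σ 1, …, σ N`. -/
def ddagMat (N : ℕ) (σ : Fin (N + 1) → ℝ) (ω : Fin N → ℝ) :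
    Matrix (Fin N) (Fin N) ℝ :=
  fun i j => -(ω j / ω i) * diffMat N σ j i.succ

/-!
Let `L` be the Lagrange basis polynomial of the node `τ_i` for the nodes `-1, τ_1, …, τ_N`, and
`p` a polynomial of degree at most `N - 1`. Then `(L p)'` has degree at most `2N - 2`, so the
quadrature rule integrates it exactly. The integral is `(L p)(1) - (L p)(-1) = δ_{iN} p(1)`, while
the quadrature sum is `∑_j ω_j D_{j,i} p(τ_j) + ω_i ṗ(τ_i)` because `L(τ_j) = δ_{ij}`. This is a
discrete integration by parts, and dividing by `-ω_i` gives `(D‡ p)_i`.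
-/

def IsExactQuadrature {n : ℕ} (a b : ℝ) (x ω : Fin n → ℝ) (d : ℕ) : Prop :=
  ∀ q : ℝ[X], q.degree ≤ d → ∫ t in a..b, q.eval t = ∑ i, ω i * q.eval (x i)

theorem Polynomial.integral_eval_derivative (f : ℝ[X]) (a b : ℝ) :
    ∫ t in a..b, (derivative f).eval t = f.eval b - f.eval a :=
  intervalIntegral.integral_eq_sub_of_hasDerivAt (fun x _ => f.hasDerivAt x)
    ((derivative f).continuous.intervalIntegrable a b)

section Lagrange

variable {N : ℕ} {a : ℝ} {τ : Fin N → ℝ}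

theorem degree_derivative_lagrangeBasis_cons_mul_le
    (hσ : Function.Injective (Fin.cons a τ : Fin (N + 1) → ℝ)) (j : Fin (N + 1)) {p : ℝ[X]}
    (hp : p.natDegree ≤ N - 1) :
    (derivative (Lagrange.basis Finset.univ (Fin.cons a τ) j * p)).degree ≤ (2 * N - 2 : ℕ) := by
  have hL : (Lagrange.basis Finset.univ (Fin.cons a τ : Fin (N + 1) → ℝ) j).natDegree = N := by
    simp [Lagrange.natDegree_basis hσ.injOn (Finset.mem_univ j)]
  refine degree_le_of_natDegree_le ((natDegree_derivative_le _).trans ?_)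
  have := natDegree_mul_le (p := Lagrange.basis Finset.univ (Fin.cons a τ) j) (q := p)
  omega

theorem eval_lagrangeBasis_cons_succ (hσ : Function.Injective (Fin.cons a τ : Fin (N + 1) → ℝ))
    (i j : Fin N) :
    (Lagrange.basis Finset.univ (Fin.cons a τ) i.succ).eval (τ j) = if j = i then 1 else 0 := by
  split_ifs with h
  · subst h
    simpa using Lagrange.eval_basis_self hσ.injOn (Finset.mem_univ j.succ)
  · simpa using Lagrange.eval_basis_of_ne (v := (Fin.cons a τ : Fin (N + 1) → ℝ))
      ((Fin.succ_injective N).ne (Ne.symm h)) (Finset.mem_univ j.succ)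

theorem eval_lagrangeBasis_cons_succ_at_head (i : Fin N) :
    (Lagrange.basis Finset.univ (Fin.cons a τ : Fin (N + 1) → ℝ) i.succ).eval a = 0 := by
  simpa using Lagrange.eval_basis_of_ne (Fin.succ_ne_zero i) (Finset.mem_univ 0)
    (v := (Fin.cons a τ : Fin (N + 1) → ℝ))

end Lagrange

section DiscreteAdjoint

variable {N : ℕ} {a b : ℝ} {τ ω : Fin N → ℝ}

theorem sum_weight_mul_diffMat_mul_eval
    (hσ : Function.Injective (Fin.cons a τ : Fin (N + 1) → ℝ))
    (hquad : IsExactQuadrature a b τ ω (2 * N - 2)) {p : ℝ[X]} (hp : p.natDegree ≤ N - 1)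
    (i : Fin N) :
    ∑ j, ω j * diffMat N (Fin.cons a τ) j i.succ * p.eval (τ j) =
      (Lagrange.basis Finset.univ (Fin.cons a τ) i.succ).eval b * p.eval b
        - ω i * (derivative p).eval (τ i) := by
  set L := Lagrange.basis Finset.univ (Fin.cons a τ : Fin (N + 1) → ℝ) i.succ
  have hexact := hquad _ (degree_derivative_lagrangeBasis_cons_mul_le hσ i.succ hp)
  have hproduct_rule : ∀ j, ω j * (derivative (L * p)).eval (τ j) =
      ω j * diffMat N (Fin.cons a τ) j i.succ * p.eval (τ j)
        + if j = i then ω i * (derivative p).eval (τ i) else 0 := by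
    intro j
    rw [derivative_mul, eval_add, eval_mul, eval_mul, eval_lagrangeBasis_cons_succ hσ]
    simp only [diffMat, Fin.cons_succ]
    split_ifs with h
    · subst h; ring
    · ring
  rw [integral_eval_derivative, eval_mul, eval_mul, eval_lagrangeBasis_cons_succ_at_head,
    Finset.sum_congr rfl fun j _ => hproduct_rule j, Finset.sum_add_distrib,
    Finset.sum_ite_eq' Finset.univ i] at hexact
  simp only [Finset.mem_univ, if_true, zero_mul, sub_zero] at hexact
  linarith

theorem ddagMat_cons_mulVec_eval (hσ : Function.Injective (Fin.cons a τ : Fin (N + 1) → ℝ))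
    (hquad : IsExactQuadrature a b τ ω (2 * N - 2)) {p : ℝ[X]} (hp : p.natDegree ≤ N - 1)
    {i : Fin N} (hωi : ω i ≠ 0) :
    (ddagMat N (Fin.cons a τ) ω).mulVec (fun j => p.eval (τ j)) i =
      (derivative p).eval (τ i)
        - (Lagrange.basis Finset.univ (Fin.cons a τ) i.succ).eval b * p.eval b / ω i := by
  have hsum := sum_weight_mul_diffMat_mul_eval hσ hquad hp i
  calc (ddagMat N (Fin.cons a τ) ω).mulVec (fun j => p.eval (τ j)) i
      = -(∑ j, ω j * diffMat N (Fin.cons a τ) j i.succ * p.eval (τ j)) / ω i := by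
        simp only [mulVec, dotProduct, ddagMat, Finset.sum_div, ← Finset.sum_neg_distrib]
        refine Finset.sum_congr rfl fun j _ => ?_
        ring
    _ = _ := by rw [hsum]; field_simp; ring

end DiscreteAdjoint

/-- For a Radau quadrature rule of order `N ≥ 2`, the matrix
`D‡` acts on the values `(p(τ_1),…,p(τ_N))` of a polynomial `p` of degree at
most `N-1` by `(D‡p)_i = ṗ(τ_i)` for `i < N` and `(D‡p)_N = ṗ(τ_N) − p(1)/ω_N`;
in particular `D‡𝟙 = −(1/ω_N) e_N`. -/
theorem ddag_differentiation (N : ℕ) (hN : 2 ≤ N) (τ ω : Fin N → ℝ)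
    (hmono : StrictMono τ)
    (hfirst : -1 < τ ⟨0, by omega⟩)
    (hlast : τ ⟨N - 1, by omega⟩ = 1)
    (hω : ∀ i, 0 < ω i)
    (hquad : ∀ q : Polynomial ℝ, q.degree ≤ (2 * N - 2 : ℕ) →
      ∫ t in (-1:ℝ)..1, q.eval t = ∑ i, ω i * q.eval (τ i)) :
    (∀ p : Polynomial ℝ, p.degree ≤ (N - 1 : ℕ) →
      (∀ i : Fin N, (i : ℕ) < N - 1 →
        (ddagMat N (Fin.cons (-1) τ) ω).mulVec (fun j => p.eval (τ j)) i =
          (derivative p).eval (τ i)) ∧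
      (ddagMat N (Fin.cons (-1) τ) ω).mulVec (fun j => p.eval (τ j)) ⟨N - 1, by omega⟩ =
        (derivative p).eval (τ ⟨N - 1, by omega⟩) - p.eval 1 / ω ⟨N - 1, by omega⟩) ∧
    (ddagMat N (Fin.cons (-1) τ) ω).mulVec (fun _ => 1) =
      fun i => if i = (⟨N - 1, by omega⟩ : Fin N) then -(1 / ω ⟨N - 1, by omega⟩) else 0 := by
  set last : Fin N := ⟨N - 1, by omega⟩
  have hσ : Function.Injective (Fin.cons (-1) τ : Fin (N + 1) → ℝ) :=
    Fin.cons_injective_iff.mpr ⟨fun ⟨j, hj⟩ =>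
      (hfirst.trans_le (hmono.monotone (Nat.zero_le j.val))).ne' hj, hmono.injective⟩
  have hL1 : ∀ i : Fin N, (Lagrange.basis Finset.univ (Fin.cons (-1) τ) i.succ).eval 1 =
      if i = last then 1 else 0 := fun i => by
    simpa [eq_comm, hlast] using eval_lagrangeBasis_cons_succ hσ i last
  have hD : ∀ p : ℝ[X], p.degree ≤ (N - 1 : ℕ) → ∀ i : Fin N,
      (ddagMat N (Fin.cons (-1) τ) ω).mulVec (fun j => p.eval (τ j)) i =
        (derivative p).eval (τ i) - (if i = last then 1 else 0) * p.eval 1 / ω i := by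
    intro p hp i
    rw [ddagMat_cons_mulVec_eval hσ hquad (natDegree_le_iff_degree_le.mpr hp) (hω i).ne', hL1]
  refine ⟨fun p hp => ⟨fun i hi => ?_, ?_⟩, funext fun i => ?_⟩
  · simp [hD p hp, Fin.ext_iff, last, hi.ne]
  · simp [hD p hp]
  · have := hD 1 (by simp) i
    split_ifs at this ⊢ <;> simp_all
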